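/- arXiv:2505.06981 — 2 statements merged into one kernel-verified Lean document; each statement's English description precedes it below -/
import Mathlib

section
/- (Effective-error reduction for spacetime Z errors.) Assume the CSS code and the code-surgery datum. Let e = (u₀, u⁽¹⁾, …, u⁽ᵈᵀ⁻¹⁾, u₁, v) with u₀, u₁, u⁽ᵗ⁾ ∈ F₂^{n+r_G} for t = 1, …, d_T−1 and v ∈ F₂^{d_T(r_X+r_M)}, and suppose H^{st}_X eᵀ = 0 (with the column blocks of H^{st}_X acting on (u₀, (u⁽¹⁾,…,u⁽ᵈᵀ⁻¹⁾), u₁, v) respectively). Define u_eff = u₀ + u⁽¹⁾ + ⋯ + u⁽ᵈᵀ⁻¹⁾ + u₁ ∈ F₂^{n+r_G}. Then H̄_X u_effᵀ = 0, J̄_X u_effᵀ = J^{st}_X eᵀ, and |u_eff| ≤ |e|. -/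
open Matrix

/-- Error-wise distance `d(H, J, ψ) ∈ ℕ∞`: the infimum of the Hamming weight `|e|` over all
row vectors `e` with `H eᵀ = 0` and `J eᵀ = ψᵀ`; `⊤` if no such `e` exists. -/
noncomputable def ewDist {χ κ μ : Type*} [Fintype κ]
    (H : Matrix χ κ (ZMod 2)) (J : Matrix μ κ (ZMod 2)) (ψ : μ → ZMod 2) : ℕ∞ :=
  sInf {w : ℕ∞ | ∃ e : κ → ZMod 2, H.mulVec e = 0 ∧ J.mulVec e = ψ ∧ w = (hammingNorm e : ℕ∞)}

/-- The pair `(H_G, H_M)` is `(d_R, S)`-bounded. -/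
def BoundedPair {n rG rM nG : ℕ} (HG : Matrix (Fin rG) (Fin nG) (ZMod 2))
    (HM : Matrix (Fin rM) (Fin rG) (ZMod 2)) (S : Matrix (Fin nG) (Fin n) (ZMod 2))
    (dR : ℕ) : Prop :=
  ∀ v : Fin rG → ZMod 2, HM.mulVec v = 0 → hammingNorm v < dR →
    ∃ u : Fin nG → ZMod 2, v = HG.mulVec u ∧
      hammingNorm (Matrix.vecMul u S) ≤ hammingNorm v

/-- Deformed-code X check matrix `H̄_X = [[H_X, T],[0, H_M]]`. -/
def HbarX {n rX rG rM : ℕ} (HX : Matrix (Fin rX) (Fin n) (ZMod 2))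
    (T : Matrix (Fin rX) (Fin rG) (ZMod 2)) (HM : Matrix (Fin rM) (Fin rG) (ZMod 2)) :
    Matrix (Fin rX ⊕ Fin rM) (Fin n ⊕ Fin rG) (ZMod 2) :=
  Matrix.fromBlocks HX T 0 HM

/-- Deformed-code Z check matrix `H̄_Z = [[H_Z, 0],[S, H_Gᵀ]]`. -/
def HbarZ {n rZ rG nG : ℕ} (HZ : Matrix (Fin rZ) (Fin n) (ZMod 2))
    (S : Matrix (Fin nG) (Fin n) (ZMod 2)) (HG : Matrix (Fin rG) (Fin nG) (ZMod 2)) :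
    Matrix (Fin rZ ⊕ Fin nG) (Fin n ⊕ Fin rG) (ZMod 2) :=
  Matrix.fromBlocks HZ 0 S HGᵀ

/-- Deformed-code X generator matrix `J̄_X = (α_⊥ J_X  β)`. -/
def JbarX {n k q rG : ℕ} (JX : Matrix (Fin k) (Fin n) (ZMod 2))
    (αperp : Matrix (Fin (k - q)) (Fin k) (ZMod 2))
    (β : Matrix (Fin (k - q)) (Fin rG) (ZMod 2)) :
    Matrix (Fin (k - q)) (Fin n ⊕ Fin rG) (ZMod 2) :=
  Matrix.fromCols (αperp * JX) β

/-- Deformed-code Z generator matrix `J̄_Z = ((α_⊥ʳ)ᵀ J_Z  0)`. -/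
def JbarZ {n k q rG : ℕ} (JZ : Matrix (Fin k) (Fin n) (ZMod 2))
    (αperpR : Matrix (Fin k) (Fin (k - q)) (ZMod 2)) :
    Matrix (Fin (k - q)) (Fin n ⊕ Fin rG) (ZMod 2) :=
  Matrix.fromCols (αperpRᵀ * JZ) (0 : Matrix (Fin (k - q)) (Fin rG) (ZMod 2))

/-- Repetition-code check matrix `H_m ∈ F₂^{(m−1)×m}`, `(H_m)_{i,j} = 1` iff `j ∈ {i, i+1}`
(1-based); in 0-based indexing: `j = i` or `j = i+1`. -/
def repH (m : ℕ) : Matrix (Fin (m - 1)) (Fin m) (ZMod 2) :=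
  Matrix.of fun i j => if (j : ℕ) = (i : ℕ) ∨ (j : ℕ) = (i : ℕ) + 1 then 1 else 0

/-- The matrix `(E_p  0) ∈ F₂^{p×m}` selecting the first `p` coordinates. -/
def projFirst (p m : ℕ) : Matrix (Fin p) (Fin m) (ZMod 2) :=
  Matrix.of fun i j => if (j : ℕ) = (i : ℕ) then 1 else 0

/-- Hamming weight of a matrix (number of nonzero entries). -/
def matWeight {ι κ : Type*} [Fintype ι] [Fintype κ] (M : Matrix ι κ (ZMod 2)) : ℕ :=
  hammingNorm (Function.uncurry M)

/-- Spacetime X check matrix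
`H^{st}_X = [[H̄_X, 0, 0, E_{d_T;1}⊗E], [0, E_{d_T−1}⊗H̄_X, 0, H_{d_T}⊗E], [0, 0, H̄_X, E_{d_T;d_T}⊗E]]`,
built from the deformed check matrix `H̄_X` (here `E = E_{r_X+r_M}`).  Rounds are 0-based:
round index `s : Fin d_T`, with `s = 0` the first round and `s = d_T − 1` the last. -/
def HstX {n rX rG rM : ℕ} (dT : ℕ)
    (HbX : Matrix (Fin rX ⊕ Fin rM) (Fin n ⊕ Fin rG) (ZMod 2)) :
    Matrix ((Fin rX ⊕ Fin rM) ⊕ (Fin (dT - 1) × (Fin rX ⊕ Fin rM)) ⊕ (Fin rX ⊕ Fin rM))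
      ((Fin n ⊕ Fin rG) ⊕ (Fin (dT - 1) × (Fin n ⊕ Fin rG)) ⊕ (Fin n ⊕ Fin rG) ⊕
        (Fin dT × (Fin rX ⊕ Fin rM))) (ZMod 2) :=
  Matrix.of fun i j =>
    match i, j with
    | Sum.inl c, Sum.inl qq => HbX c qq
    | Sum.inl c, Sum.inr (Sum.inr (Sum.inr (s, c'))) =>
        if (s : ℕ) = 0 ∧ c' = c then 1 else 0
    | Sum.inr (Sum.inl (t, c)), Sum.inr (Sum.inl (t', qq)) =>
        if t' = t then HbX c qq else 0
    | Sum.inr (Sum.inl (t, c)), Sum.inr (Sum.inr (Sum.inr (s, c'))) =>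
        if ((s : ℕ) = (t : ℕ) ∨ (s : ℕ) = (t : ℕ) + 1) ∧ c' = c then 1 else 0
    | Sum.inr (Sum.inr c), Sum.inr (Sum.inr (Sum.inl qq)) => HbX c qq
    | Sum.inr (Sum.inr c), Sum.inr (Sum.inr (Sum.inr (s, c'))) =>
        if (s : ℕ) = dT - 1 ∧ c' = c then 1 else 0
    | _, _ => 0

/-- Spacetime Z check matrix
`H^{st}_Z = [[H_Z, 0, 0, E_{d_T;1}⊗γ₁], [0, E_{d_T−1}⊗H̄_Z, 0, H_{d_T}⊗E], [0, 0, H_Z, E_{d_T;d_T}⊗γ₁]]`,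
built from `H_Z` and the deformed check matrix `H̄_Z` (here `E = E_{r_Z+n_G}` and
`γ₁ = (E_{r_Z}  0)`). -/
def HstZ {n rZ rG nG : ℕ} (dT : ℕ) (HZ : Matrix (Fin rZ) (Fin n) (ZMod 2))
    (HbZ : Matrix (Fin rZ ⊕ Fin nG) (Fin n ⊕ Fin rG) (ZMod 2)) :
    Matrix (Fin rZ ⊕ (Fin (dT - 1) × (Fin rZ ⊕ Fin nG)) ⊕ Fin rZ)
      (Fin n ⊕ (Fin (dT - 1) × (Fin n ⊕ Fin rG)) ⊕ Fin n ⊕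
        (Fin dT × (Fin rZ ⊕ Fin nG))) (ZMod 2) :=
  Matrix.of fun i j =>
    match i, j with
    | Sum.inl z, Sum.inl a => HZ z a
    | Sum.inl z, Sum.inr (Sum.inr (Sum.inr (s, w))) =>
        if (s : ℕ) = 0 ∧ w = Sum.inl z then 1 else 0
    | Sum.inr (Sum.inl (t, w)), Sum.inr (Sum.inl (t', qq)) =>
        if t' = t then HbZ w qq else 0
    | Sum.inr (Sum.inl (t, w)), Sum.inr (Sum.inr (Sum.inr (s, w'))) =>
        if ((s : ℕ) = (t : ℕ) ∨ (s : ℕ) = (t : ℕ) + 1) ∧ w' = w then 1 else 0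
    | Sum.inr (Sum.inr z), Sum.inr (Sum.inr (Sum.inl a)) => HZ z a
    | Sum.inr (Sum.inr z), Sum.inr (Sum.inr (Sum.inr (s, w))) =>
        if (s : ℕ) = dT - 1 ∧ w = Sum.inl z then 1 else 0
    | _, _ => 0

/-- Spacetime X generator matrix `J^{st}_X = (J̄_X, 1_{d_T−1}⊗J̄_X, J̄_X, 0)`. -/
def JstX {n k q rX rG rM : ℕ} (dT : ℕ)
    (JbX : Matrix (Fin (k - q)) (Fin n ⊕ Fin rG) (ZMod 2)) :
    Matrix (Fin (k - q))
      ((Fin n ⊕ Fin rG) ⊕ (Fin (dT - 1) × (Fin n ⊕ Fin rG)) ⊕ (Fin n ⊕ Fin rG) ⊕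
        (Fin dT × (Fin rX ⊕ Fin rM))) (ZMod 2) :=
  Matrix.of fun i j =>
    match j with
    | Sum.inl qq => JbX i qq
    | Sum.inr (Sum.inl (_, qq)) => JbX i qq
    | Sum.inr (Sum.inr (Sum.inl qq)) => JbX i qq
    | Sum.inr (Sum.inr (Sum.inr _)) => 0

/-- Spacetime Z generator matrix `J^{st}_Z = ((α_⊥ʳ)ᵀJ_Z, 1_{d_T−1}⊗J̄_Z, (α_⊥ʳ)ᵀJ_Z, 0)`,
given `JZ' = (α_⊥ʳ)ᵀ J_Z` and `J̄_Z`. -/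
def JstZ {n k q rZ rG nG : ℕ} (dT : ℕ)
    (JZ' : Matrix (Fin (k - q)) (Fin n) (ZMod 2))
    (JbZ : Matrix (Fin (k - q)) (Fin n ⊕ Fin rG) (ZMod 2)) :
    Matrix (Fin (k - q))
      (Fin n ⊕ (Fin (dT - 1) × (Fin n ⊕ Fin rG)) ⊕ Fin n ⊕
        (Fin dT × (Fin rZ ⊕ Fin nG))) (ZMod 2) :=
  Matrix.of fun i j =>
    match j with
    | Sum.inl a => JZ' i a
    | Sum.inr (Sum.inl (_, qq)) => JbZ i qq
    | Sum.inr (Sum.inr (Sum.inl a)) => JZ' i a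
    | Sum.inr (Sum.inr (Sum.inr _)) => 0

/-- Spacetime generator matrix for measured Z logical operators
`J^{st}_{mz} = (αJ_Z, 1_{d_T−1}⊗(αJ_Z η), αJ_Z, 0)`, given `M = α J_Z`
(note `α J_Z η = (α J_Z  0)`). -/
def JstMZ {n q rZ rG nG : ℕ} (dT : ℕ) (M : Matrix (Fin q) (Fin n) (ZMod 2)) :
    Matrix (Fin q)
      (Fin n ⊕ (Fin (dT - 1) × (Fin n ⊕ Fin rG)) ⊕ Fin n ⊕
        (Fin dT × (Fin rZ ⊕ Fin nG))) (ZMod 2) :=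
  Matrix.of fun i j =>
    match j with
    | Sum.inl a => M i a
    | Sum.inr (Sum.inl (_, Sum.inl a)) => M i a
    | Sum.inr (Sum.inl (_, Sum.inr _)) => 0
    | Sum.inr (Sum.inr (Sum.inl a)) => M i a
    | Sum.inr (Sum.inr (Sum.inr _)) => 0

/-- Spacetime generator matrix for measurement outcomes
`J^{st}_{oc} = (αJ_Z, 0, 0, E_{d_T;1}⊗(αJ_Z R γ₂))`, given `M = α J_Z` and `N = α J_Z R`
(note `α J_Z R γ₂ = (0  α J_Z R)`). -/
def JstOC {n q rZ rG nG : ℕ} (dT : ℕ) (M : Matrix (Fin q) (Fin n) (ZMod 2))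
    (N : Matrix (Fin q) (Fin nG) (ZMod 2)) :
    Matrix (Fin q)
      (Fin n ⊕ (Fin (dT - 1) × (Fin n ⊕ Fin rG)) ⊕ Fin n ⊕
        (Fin dT × (Fin rZ ⊕ Fin nG))) (ZMod 2) :=
  Matrix.of fun i j =>
    match j with
    | Sum.inl a => M i a
    | Sum.inr (Sum.inl _) => 0
    | Sum.inr (Sum.inr (Sum.inl _)) => 0
    | Sum.inr (Sum.inr (Sum.inr (_, Sum.inl _))) => 0
    | Sum.inr (Sum.inr (Sum.inr (s, Sum.inr g))) => if (s : ℕ) = 0 then N i g else 0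

open Finset in
lemma sum_ite_val {m : ℕ} (p : ℕ) (hp : p < m) (f : Fin m → ZMod 2) :
    ∑ x : Fin m, (if (x : ℕ) = p then f x else 0) = f ⟨p, hp⟩ := by
  rw [Finset.sum_eq_single ⟨p, hp⟩]
  · simp
  · intro b _ hb; simp only [Ne, Fin.ext_iff] at hb; simp [hb]
  · simp

open Finset in
lemma sum_ite_val2 {m : ℕ} (p q : ℕ) (hp : p < m) (hq : q < m) (hne : p ≠ q)
    (f : Fin m → ZMod 2) :
    ∑ x : Fin m, (if ((x:ℕ) = p ∨ (x:ℕ) = q) then f x else 0) = f ⟨p,hp⟩ + f ⟨q,hq⟩ := by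
  have h : ∀ x : Fin m, (if ((x:ℕ) = p ∨ (x:ℕ) = q) then f x else 0)
      = (if (x:ℕ)=p then f x else 0) + (if (x:ℕ)=q then f x else 0) := by
    intro x; split_ifs with h1 h2 h3 h4 h5 <;> first | omega | simp_all | ring
  simp_rw [h, Finset.sum_add_distrib, sum_ite_val p hp, sum_ite_val q hq]

lemma tele (m : ℕ) (f : ℕ → ZMod 2) :
    ∑ i ∈ Finset.range m, (f i + f (i+1)) = f 0 + f m := by
  induction m with
  | zero => rw [Finset.sum_range_zero]; rw [CharTwo.add_self_eq_zero]
  | succ m ih =>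
    rw [Finset.sum_range_succ, ih]
    have : f m + f m = 0 := CharTwo.add_self_eq_zero _
    calc f 0 + f m + (f m + f (m+1)) = f 0 + ((f m + f m) + f (m+1)) := by ring
    _ = f 0 + f (m+1) := by rw [this]; ring

section rows
variable {dT rX rM n rG : ℕ} (hdT : 2 ≤ dT)
    (HbX : Matrix (Fin rX ⊕ Fin rM) (Fin n ⊕ Fin rG) (ZMod 2))
    (u0 u1 : Fin n ⊕ Fin rG → ZMod 2)
    (u : Fin (dT - 1) → Fin n ⊕ Fin rG → ZMod 2)
    (v : Fin dT × (Fin rX ⊕ Fin rM) → ZMod 2)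
    (hcheck : (HstX dT HbX).mulVec (Sum.elim u0 (Sum.elim (fun pr => u pr.1 pr.2) (Sum.elim u1 v))) = 0)

include hcheck hdT in
lemma row1 (c : Fin rX ⊕ Fin rM) :
    (HbX.mulVec u0) c + v (⟨0, by omega⟩, c) = 0 := by
  have h := congrFun hcheck (Sum.inl c)
  obtain cl | cr := c <;>
  · simp [HstX, Matrix.mulVec, dotProduct, Fintype.sum_sum_type, Fintype.sum_prod_type,
      ite_and] at h
    rw [sum_ite_val 0 (by omega)] at h
    simpa [Matrix.mulVec, dotProduct, Fintype.sum_sum_type] using h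

include hcheck hdT in
lemma row3 (c : Fin rX ⊕ Fin rM) :
    (HbX.mulVec u1) c + v (⟨dT - 1, by omega⟩, c) = 0 := by
  have h := congrFun hcheck (Sum.inr (Sum.inr c))
  obtain cl | cr := c <;>
  · simp [HstX, Matrix.mulVec, dotProduct, Fintype.sum_sum_type, Fintype.sum_prod_type,
      ite_and] at h
    rw [sum_ite_val (dT-1) (by omega)] at h
    simpa [Matrix.mulVec, dotProduct, Fintype.sum_sum_type] using h

include hcheck hdT in
lemma row2 (t : Fin (dT - 1)) (c : Fin rX ⊕ Fin rM) :
    (HbX.mulVec (u t)) c + (v (⟨t, by omega⟩, c) + v (⟨(t:ℕ)+1, by omega⟩, c)) = 0 := by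
  have h := congrFun hcheck (Sum.inr (Sum.inl (t, c)))
  obtain cl | cr := c <;>
  · simp [HstX, Matrix.mulVec, dotProduct, Fintype.sum_sum_type, Fintype.sum_prod_type,
      ite_and] at h
    rw [sum_ite_val2 (t:ℕ) ((t:ℕ)+1) (by omega) (by omega) (by omega)] at h
    simpa [Matrix.mulVec, dotProduct, Fintype.sum_sum_type, add_assoc] using h
end rows

section main
variable {dT rX rM n rG : ℕ} (hdT : 2 ≤ dT)
    (HbX : Matrix (Fin rX ⊕ Fin rM) (Fin n ⊕ Fin rG) (ZMod 2))
    (u0 u1 : Fin n ⊕ Fin rG → ZMod 2)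
    (u : Fin (dT - 1) → Fin n ⊕ Fin rG → ZMod 2)
    (v : Fin dT × (Fin rX ⊕ Fin rM) → ZMod 2)
    (hcheck : (HstX dT HbX).mulVec (Sum.elim u0 (Sum.elim (fun pr => u pr.1 pr.2) (Sum.elim u1 v))) = 0)

include hcheck hdT in
lemma part1 : HbX.mulVec (u0 + (∑ t, u t) + u1) = 0 := by
  funext c
  have key : ∀ a b : ZMod 2, a + b = 0 → a = b := by decide
  set f : ℕ → ZMod 2 := fun i => if h : i < dT then v (⟨i, h⟩, c) else 0 with hf
  have hfe : ∀ (i : ℕ) (h : i < dT), f i = v (⟨i, h⟩, c) := fun i h => by simp [hf, h]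
  have E1 : (HbX *ᵥ u0) c = f 0 := by
    rw [hfe 0 (by omega)]; exact key _ _ (row1 hdT HbX u0 u1 u v hcheck c)
  have E3 : (HbX *ᵥ u1) c = f (dT - 1) := by
    rw [hfe (dT-1) (by omega)]; exact key _ _ (row3 hdT HbX u0 u1 u v hcheck c)
  have E2 : ∀ t : Fin (dT - 1), (HbX *ᵥ u t) c = f t + f ((t : ℕ) + 1) := by
    intro t
    rw [hfe (t:ℕ) (by omega), hfe ((t:ℕ)+1) (by omega)]
    exact key _ _ (row2 hdT HbX u0 u1 u v hcheck t c)
  have expand : (HbX *ᵥ (u0 + (∑ t, u t) + u1)) c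
      = (HbX *ᵥ u0) c + (∑ t, (HbX *ᵥ u t) c) + (HbX *ᵥ u1) c := by
    rw [Matrix.mulVec_add, Matrix.mulVec_add, Pi.add_apply, Pi.add_apply]
    have : (HbX *ᵥ ∑ t, u t) c = ∑ t, (HbX *ᵥ u t) c := by
      simp only [Matrix.mulVec, dotProduct, Finset.sum_apply, Finset.mul_sum]
      exact Finset.sum_comm
    rw [this]
  rw [Pi.zero_apply, expand, E1, E3]
  have : (∑ t, (HbX *ᵥ u t) c) = f 0 + f (dT - 1) := by
    calc (∑ t, (HbX *ᵥ u t) c) = ∑ t : Fin (dT-1), (f t + f ((t:ℕ)+1)) := by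
          exact Finset.sum_congr rfl fun t _ => E2 t
    _ = ∑ i ∈ Finset.range (dT-1), (f i + f (i+1)) := by
          exact Fin.sum_univ_eq_sum_range (fun i => f i + f (i+1)) (dT-1)
    _ = f 0 + f (dT - 1) := tele _ f
  rw [this]
  have : ∀ a b : ZMod 2, a + (a + b) + b = 0 := by decide
  exact this _ _

include hcheck in
lemma part3 : hammingNorm (u0 + (∑ t, u t) + u1)
    ≤ hammingNorm (Sum.elim u0 (Sum.elim (fun pr : Fin (dT-1) × (Fin n ⊕ Fin rG) => u pr.1 pr.2) (Sum.elim u1 v))) := by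
  classical
  rcases isEmpty_or_nonempty (Fin n ⊕ Fin rG) with hE | hE
  · have : hammingNorm (u0 + (∑ t, u t) + u1) = 0 := by
      unfold hammingNorm; simp
    omega
  · set E := Sum.elim u0 (Sum.elim (fun pr : Fin (dT-1) × (Fin n ⊕ Fin rG) => u pr.1 pr.2) (Sum.elim u1 v)) with hEdef
    set g : ((Fin n ⊕ Fin rG) ⊕ (Fin (dT-1) × (Fin n ⊕ Fin rG)) ⊕ (Fin n ⊕ Fin rG) ⊕ (Fin dT × (Fin rX ⊕ Fin rM))) → (Fin n ⊕ Fin rG) :=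
      fun j => match j with
        | Sum.inl qq => qq
        | Sum.inr (Sum.inl (_, qq)) => qq
        | Sum.inr (Sum.inr (Sum.inl qq)) => qq
        | Sum.inr (Sum.inr (Sum.inr _)) => Classical.arbitrary _
      with hg
    unfold hammingNorm
    apply Finset.card_le_card_of_surjOn g
    intro qq hqq
    simp only [Finset.coe_filter, Finset.mem_univ, true_and, Set.mem_setOf_eq] at hqq
    have : u0 qq ≠ 0 ∨ (∃ t, u t qq ≠ 0) ∨ u1 qq ≠ 0 := by
      by_contra hcon
      push_neg at hcon
      obtain ⟨h0, ht, h1⟩ := hcon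
      apply hqq
      have hsum : (∑ t, u t) qq = 0 := by
        rw [Finset.sum_apply]; exact Finset.sum_eq_zero fun t _ => ht t
      simp [Pi.add_apply, h0, hsum, h1]
    rcases this with h | ⟨t, h⟩ | h
    · exact ⟨Sum.inl qq, by simpa [hEdef] using h, rfl⟩
    · exact ⟨Sum.inr (Sum.inl (t, qq)), by simpa [hEdef] using h, rfl⟩
    · exact ⟨Sum.inr (Sum.inr (Sum.inl qq)), by simpa [hEdef] using h, rfl⟩

lemma part2 {k q : ℕ} (JbX : Matrix (Fin (k - q)) (Fin n ⊕ Fin rG) (ZMod 2)) :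
    JbX.mulVec (u0 + (∑ t, u t) + u1)
      = (JstX (rX := rX) (rM := rM) dT JbX).mulVec
          (Sum.elim u0 (Sum.elim (fun pr : Fin (dT-1) × (Fin n ⊕ Fin rG) => u pr.1 pr.2) (Sum.elim u1 v))) := by
  funext i
  simp only [JstX, Matrix.mulVec, dotProduct, Fintype.sum_sum_type, Fintype.sum_prod_type,
    Matrix.of_apply, Sum.elim_inl, Sum.elim_inr, Pi.add_apply, Finset.sum_apply, mul_add,
    Finset.sum_add_distrib, Finset.mul_sum, mul_zero, zero_mul, Finset.sum_const_zero, add_zero]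
  rw [show (∑ a₁ : Fin n, ∑ t : Fin (dT-1), JbX i (Sum.inl a₁) * u t (Sum.inl a₁))
      = ∑ t : Fin (dT-1), ∑ a₁ : Fin n, JbX i (Sum.inl a₁) * u t (Sum.inl a₁) from Finset.sum_comm,
    show (∑ a₂ : Fin rG, ∑ t : Fin (dT-1), JbX i (Sum.inr a₂) * u t (Sum.inr a₂))
      = ∑ t : Fin (dT-1), ∑ a₂ : Fin rG, JbX i (Sum.inr a₂) * u t (Sum.inr a₂) from Finset.sum_comm]
  ring
end main

/-- effective-error reduction for spacetime Z errors. -/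
theorem effective_error_reduction_X_checks
    {n k q rX rZ rG rM nG : ℕ}
    (HX : Matrix (Fin rX) (Fin n) (ZMod 2)) (HZ : Matrix (Fin rZ) (Fin n) (ZMod 2))
    (JX JZ : Matrix (Fin k) (Fin n) (ZMod 2))
    (hHXHZ : HX * HZᵀ = 0) (hHXJZ : HX * JZᵀ = 0) (hHZJX : HZ * JXᵀ = 0)
    (hJXJZ : JX * JZᵀ = 1)
    (hq1 : 1 ≤ q) (hqk : q ≤ k)
    (α : Matrix (Fin q) (Fin k) (ZMod 2))
    (αperp : Matrix (Fin (k - q)) (Fin k) (ZMod 2)) (hperp : αperp * αᵀ = 0)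
    (αperpR : Matrix (Fin k) (Fin (k - q)) (ZMod 2)) (hrinv : αperp * αperpR = 1)
    (S : Matrix (Fin nG) (Fin n) (ZMod 2)) (T : Matrix (Fin rX) (Fin rG) (ZMod 2))
    (HG : Matrix (Fin rG) (Fin nG) (ZMod 2)) (HM : Matrix (Fin rM) (Fin rG) (ZMod 2))
    (R : Matrix (Fin n) (Fin nG) (ZMod 2)) (β : Matrix (Fin (k - q)) (Fin rG) (ZMod 2))
    (hs1 : HX * Sᵀ = T * HG) (hs2 : HM * HG = 0)
    (hs3a : α * JZ * R * S = α * JZ) (hs3b : HG * (α * JZ * R)ᵀ = 0)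
    (hs4 : αperp * JX * Sᵀ = β * HG)
    (dT : ℕ) (hdT : 2 ≤ dT)
    (u0 u1 : Fin n ⊕ Fin rG → ZMod 2)
    (u : Fin (dT - 1) → Fin n ⊕ Fin rG → ZMod 2)
    (v : Fin dT × (Fin rX ⊕ Fin rM) → ZMod 2)
    (e : (Fin n ⊕ Fin rG) ⊕ (Fin (dT - 1) × (Fin n ⊕ Fin rG)) ⊕ (Fin n ⊕ Fin rG) ⊕
        (Fin dT × (Fin rX ⊕ Fin rM)) → ZMod 2)
    (he : e = Sum.elim u0 (Sum.elim (fun pr => u pr.1 pr.2) (Sum.elim u1 v)))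
    (hcheck : (HstX dT (HbarX HX T HM)).mulVec e = 0)
    (ueff : Fin n ⊕ Fin rG → ZMod 2)
    (hueff : ueff = u0 + (∑ t, u t) + u1) :
    (HbarX HX T HM).mulVec ueff = 0 ∧
    (JbarX JX αperp β).mulVec ueff = (JstX dT (JbarX JX αperp β)).mulVec e ∧
    hammingNorm ueff ≤ hammingNorm e := by
  subst he hueff
  exact ⟨part1 hdT (HbarX HX T HM) u0 u1 u v hcheck,
    part2 u0 u1 u v (JbarX JX αperp β),
    part3 (HbarX HX T HM) u0 u1 u v hcheck⟩
end

section
/- (Effective-error reduction for spacetime X errors.) Assume the CSS code and the code-surgery datum. Let e = (u₀, u⁽¹⁾, …, u⁽ᵈᵀ⁻¹⁾, u₁, v) with u₀, u₁ ∈ F₂^{n}, u⁽ᵗ⁾ ∈ F₂^{n+r_G} for t = 1, …, d_T−1 and v ∈ F₂^{d_T(r_Z+n_G)}, and suppose H^{st}_Z eᵀ = 0 (with the column blocks of H^{st}_Z acting on (u₀, (u⁽¹⁾,…,u⁽ᵈᵀ⁻¹⁾), u₁, v) respectively). Define u_eff = u₀ + Σ_{t=1}^{d_T−1} ũ⁽ᵗ⁾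 + u₁ ∈ F₂^{n}, where ũ⁽ᵗ⁾ ∈ F₂^{n} is the vector of the first n coordinates of u⁽ᵗ⁾ (i.e., ũ⁽ᵗ⁾ᵀ = η u⁽ᵗ⁾ᵀ). Then H_Z u_effᵀ = 0, (α_⊥ʳ)ᵀ J_Z u_effᵀ = J^{st}_Z eᵀ, α J_Z u_effᵀ = J^{st}_{mz} eᵀ, and |u_eff| ≤ |e|. -/
open Matrix

lemma hn_eq_sum {ι : Type*} [Fintype ι] (x : ι → ZMod 2) :
    hammingNorm x = ∑ i, if x i ≠ 0 then 1 else 0 := by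
  rw [hammingNorm, Finset.card_filter]

lemma hn_add_le {ι : Type*} [Fintype ι] (f g : ι → ZMod 2) :
    hammingNorm (f + g) ≤ hammingNorm f + hammingNorm g := by
  have h := hammingDist_triangle (f + g) g 0
  rw [hammingDist_zero_right, hammingDist_zero_right, hammingDist_eq_hammingNorm] at h
  have hf : -f = f := by funext i; exact ZMod.neg_eq_self_mod_two _
  simpa [hf] using h

lemma hn_sum_le {ι τ : Type*} [Fintype ι] (s : Finset τ) (f : τ → ι → ZMod 2) :
    hammingNorm (∑ t ∈ s, f t) ≤ ∑ t ∈ s, hammingNorm (f t) := by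
  classical
  induction s using Finset.induction with
  | empty => simp
  | insert a s h ih =>
      rw [Finset.sum_insert h, Finset.sum_insert h]
      exact le_trans (hn_add_le _ _) (by omega)

lemma hn_sumElim {ι κ : Type*} [Fintype ι] [Fintype κ] (f : ι → ZMod 2) (g : κ → ZMod 2) :
    hammingNorm (Sum.elim f g) = hammingNorm f + hammingNorm g := by
  simp [hn_eq_sum, Fintype.sum_sum_type]
  convert rfl <;> (split_ifs <;> simp_all)

lemma hn_prod {τ ι : Type*} [Fintype τ] [Fintype ι] (u : τ → ι → ZMod 2) :
    hammingNorm (fun p : τ × ι => u p.1 p.2) = ∑ t, hammingNorm (u t) := by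
  simp [hn_eq_sum, Fintype.sum_prod_type]

lemma hn_inl_le {ι κ : Type*} [Fintype ι] [Fintype κ] (f : ι ⊕ κ → ZMod 2) :
    hammingNorm (fun a : ι => f (Sum.inl a)) ≤ hammingNorm f := by
  simp only [hn_eq_sum, Fintype.sum_sum_type]
  exact Nat.le_add_right _ _

lemma delta_sum_one {ι : Type*} [Fintype ι] [DecidableEq ι] (f : ι → ZMod 2) (i0 : ι)
    (P : ι → Prop) [DecidablePred P] (hP : ∀ i, P i ↔ i = i0) :
    (∑ i, (if P i then (1 : ZMod 2) else 0) * f i) = f i0 := by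
  simp only [hP, ite_mul, one_mul, zero_mul]
  simp

lemma delta_sum_two {ι : Type*} [Fintype ι] [DecidableEq ι] (f : ι → ZMod 2) (i1 i2 : ι)
    (h12 : i1 ≠ i2) (P : ι → Prop) [DecidablePred P] (hP : ∀ i, P i ↔ i = i1 ∨ i = i2) :
    (∑ i, (if P i then (1 : ZMod 2) else 0) * f i) = f i1 + f i2 := by
  simp only [hP, ite_mul, one_mul, zero_mul]
  have : ∀ i : ι, (if i = i1 ∨ i = i2 then f i else 0)
      = (if i = i1 then f i else 0) + (if i = i2 then f i else 0) := by
    intro i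
    by_cases h1 : i = i1 <;> by_cases h2 : i = i2 <;> simp_all
  rw [Finset.sum_congr rfl fun i _ => this i, Finset.sum_add_distrib]
  simp

lemma telescope_zmod2 (g : ℕ → ZMod 2) (m : ℕ) :
    ∑ t ∈ Finset.range m, (g t + g (t + 1)) = g 0 + g m := by
  have h : ∀ t, g t + g (t + 1) = g (t + 1) - g t := by
    intro t; have : ∀ a b : ZMod 2, a + b = b - a := by decide
    exact this _ _
  simp_rw [h]
  rw [Finset.sum_range_sub]
  have : ∀ a b : ZMod 2, a - b = b + a := by decide
  exact this _ _

lemma mulVec_sum' {m n τ : Type*} [Fintype n] [Fintype τ] (M : Matrix m n (ZMod 2))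
    (f : τ → n → ZMod 2) : M.mulVec (∑ t, f t) = ∑ t, M.mulVec (f t) := by
  ext i
  simp only [Matrix.mulVec, dotProduct, Finset.sum_apply, Finset.mul_sum]
  rw [Finset.sum_comm]

lemma sum_prod_fst_delta {τ κ : Type*} [Fintype τ] [DecidableEq τ] [Fintype κ]
    (t : τ) (g : κ → ZMod 2) (f : τ → κ → ZMod 2) :
    ∑ p : τ × κ, (if p.1 = t then g p.2 else 0) * f p.1 p.2 = ∑ q, g q * f t q := by
  rw [Fintype.sum_prod_type]
  simp [ite_mul]

/-- effective-error reduction for spacetime X errors. -/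
theorem effective_error_reduction_Z_checks
    {n k q rX rZ rG rM nG : ℕ}
    (HX : Matrix (Fin rX) (Fin n) (ZMod 2)) (HZ : Matrix (Fin rZ) (Fin n) (ZMod 2))
    (JX JZ : Matrix (Fin k) (Fin n) (ZMod 2))
    (hHXHZ : HX * HZᵀ = 0) (hHXJZ : HX * JZᵀ = 0) (hHZJX : HZ * JXᵀ = 0)
    (hJXJZ : JX * JZᵀ = 1)
    (hq1 : 1 ≤ q) (hqk : q ≤ k)
    (α : Matrix (Fin q) (Fin k) (ZMod 2))
    (αperp : Matrix (Fin (k - q)) (Fin k) (ZMod 2)) (hperp : αperp * αᵀ = 0)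
    (αperpR : Matrix (Fin k) (Fin (k - q)) (ZMod 2)) (hrinv : αperp * αperpR = 1)
    (S : Matrix (Fin nG) (Fin n) (ZMod 2)) (T : Matrix (Fin rX) (Fin rG) (ZMod 2))
    (HG : Matrix (Fin rG) (Fin nG) (ZMod 2)) (HM : Matrix (Fin rM) (Fin rG) (ZMod 2))
    (R : Matrix (Fin n) (Fin nG) (ZMod 2)) (β : Matrix (Fin (k - q)) (Fin rG) (ZMod 2))
    (hs1 : HX * Sᵀ = T * HG) (hs2 : HM * HG = 0)
    (hs3a : α * JZ * R * S = α * JZ) (hs3b : HG * (α * JZ * R)ᵀ = 0)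
    (hs4 : αperp * JX * Sᵀ = β * HG)
    (dT : ℕ) (hdT : 2 ≤ dT)
    (u0 u1 : Fin n → ZMod 2)
    (u : Fin (dT - 1) → Fin n ⊕ Fin rG → ZMod 2)
    (v : Fin dT × (Fin rZ ⊕ Fin nG) → ZMod 2)
    (e : Fin n ⊕ (Fin (dT - 1) × (Fin n ⊕ Fin rG)) ⊕ Fin n ⊕
        (Fin dT × (Fin rZ ⊕ Fin nG)) → ZMod 2)
    (he : e = Sum.elim u0 (Sum.elim (fun pr => u pr.1 pr.2) (Sum.elim u1 v)))
    (hcheck : (HstZ dT HZ (HbarZ HZ S HG)).mulVec e = 0)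
    (ueff : Fin n → ZMod 2)
    (hueff : ueff = u0 + (∑ t, fun a => u t (Sum.inl a)) + u1) :
    HZ.mulVec ueff = 0 ∧
    (αperpRᵀ * JZ).mulVec ueff =
      (JstZ dT (αperpRᵀ * JZ) (JbarZ JZ αperpR)).mulVec e ∧
    (α * JZ).mulVec ueff = (JstMZ dT (α * JZ)).mulVec e ∧
    hammingNorm ueff ≤ hammingNorm e := by
  classical
  have hdT1 : 0 < dT := by omega
  set s0 : Fin dT := ⟨0, hdT1⟩ with hs0
  set sL : Fin dT := ⟨dT - 1, by omega⟩ with hsL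
  have hab : ∀ a b : ZMod 2, a + b = 0 → a = b := by decide
  set ut : Fin (dT - 1) → Fin n → ZMod 2 := fun t a => u t (Sum.inl a) with hut
  have hueff' : ueff = u0 + (∑ t, ut t) + u1 := hueff
  -- row equations
  have h0 : ∀ z, HZ.mulVec u0 z = v (s0, Sum.inl z) := by
    intro z
    have hc := congrFun hcheck (Sum.inl z)
    simp only [HstZ, Matrix.mulVec, dotProduct, he, Fintype.sum_sum_type, Matrix.of_apply,
      Sum.elim_inl, Sum.elim_inr, Pi.zero_apply, zero_mul, Finset.sum_const_zero, add_zero,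
      zero_add] at hc
    rw [delta_sum_one v (s0, Sum.inl z) _ (fun p => by
      constructor
      · rintro ⟨h1, h2⟩
        exact Prod.ext (Fin.ext h1) h2
      · rintro rfl; exact ⟨rfl, rfl⟩)] at hc
    exact hab _ _ hc
  have h1 : ∀ z, HZ.mulVec u1 z = v (sL, Sum.inl z) := by
    intro z
    have hc := congrFun hcheck (Sum.inr (Sum.inr z))
    simp only [HstZ, Matrix.mulVec, dotProduct, he, Fintype.sum_sum_type, Matrix.of_apply,
      Sum.elim_inl, Sum.elim_inr, Pi.zero_apply, zero_mul, Finset.sum_const_zero, add_zero,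
      zero_add] at hc
    rw [delta_sum_one v (sL, Sum.inl z) _ (fun p => by
      constructor
      · rintro ⟨h1, h2⟩
        exact Prod.ext (Fin.ext h1) h2
      · rintro rfl; exact ⟨rfl, rfl⟩)] at hc
    exact hab _ _ hc
  have hst : ∀ t : Fin (dT - 1), (t : ℕ) < dT := fun t => by have := t.isLt; omega
  have hst' : ∀ t : Fin (dT - 1), (t : ℕ) + 1 < dT := fun t => by have := t.isLt; omega
  have hmid : ∀ (t : Fin (dT - 1)) (w : Fin rZ ⊕ Fin nG),
      (HbarZ HZ S HG).mulVec (u t) w = v (⟨t, hst t⟩, w) + v (⟨t + 1, hst' t⟩, w) := by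
    intro t w
    have hc := congrFun hcheck (Sum.inr (Sum.inl (t, w)))
    simp only [HstZ, Matrix.mulVec, dotProduct, he, Fintype.sum_sum_type, Matrix.of_apply,
      Sum.elim_inl, Sum.elim_inr, Pi.zero_apply, zero_mul, Finset.sum_const_zero, add_zero,
      zero_add] at hc
    rw [sum_prod_fst_delta t (fun q => HbarZ HZ S HG w q) (fun t' q => u t' q)] at hc
    rw [delta_sum_two v (⟨t, hst t⟩, w) (⟨t + 1, hst' t⟩, w)
      (by intro hh; have := congrArg (fun p => (p.1 : ℕ)) hh; simp at this)
      _ (fun p => by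
        constructor
        · rintro ⟨h1 | h1, h2⟩
          · exact Or.inl (Prod.ext (Fin.ext h1) h2)
          · exact Or.inr (Prod.ext (Fin.ext h1) h2)
        · rintro (rfl | rfl)
          · exact ⟨Or.inl rfl, rfl⟩
          · exact ⟨Or.inr rfl, rfl⟩)] at hc
    exact hab _ _ hc
  have hHb : ∀ (t : Fin (dT - 1)) z,
      (HbarZ HZ S HG).mulVec (u t) (Sum.inl z) = HZ.mulVec (ut t) z := by
    intro t z
    simp [HbarZ, Matrix.mulVec, dotProduct, Fintype.sum_sum_type, hut]
  -- goal 1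
  have G1 : HZ.mulVec ueff = 0 := by
    funext z
    rw [hueff', Matrix.mulVec_add, Matrix.mulVec_add, mulVec_sum']
    have hmid' : ∀ t : Fin (dT - 1),
        HZ.mulVec (ut t) z = v (⟨t, hst t⟩, Sum.inl z) + v (⟨t + 1, hst' t⟩, Sum.inl z) := by
      intro t; rw [← hHb, hmid]
    set g : ℕ → ZMod 2 := fun m => if h : m < dT then v (⟨m, h⟩, Sum.inl z) else 0 with hg
    have hsum : ∑ t : Fin (dT - 1), HZ.mulVec (ut t) z = g 0 + g (dT - 1) := by
      have : ∀ t : Fin (dT - 1), HZ.mulVec (ut t) z = g t + g ((t : ℕ) + 1) := by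
        intro t
        rw [hmid' t]
        simp only [hg]
        rw [dif_pos (hst t), dif_pos (hst' t)]
      rw [Finset.sum_congr rfl fun t _ => this t]
      rw [Fin.sum_univ_eq_sum_range (fun m => g m + g (m + 1)) (dT - 1)]
      exact telescope_zmod2 g (dT - 1)
    have hg0 : g 0 = v (s0, Sum.inl z) := by simp only [hg]; rw [dif_pos hdT1]
    have hgL : g (dT - 1) = v (sL, Sum.inl z) := by
      simp only [hg]; rw [dif_pos (show dT - 1 < dT by omega)]
    simp only [Pi.add_apply, Finset.sum_apply, Pi.zero_apply]
    rw [h0, h1, hsum, hg0, hgL]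
    exact (by decide : ∀ a b : ZMod 2, a + (a + b) + b = 0) _ _
  refine ⟨G1, ?_, ?_, ?_⟩
  · funext i
    rw [hueff', Matrix.mulVec_add, Matrix.mulVec_add, mulVec_sum']
    simp only [JstZ, JbarZ, Matrix.fromCols, Matrix.mulVec, dotProduct, he,
      Fintype.sum_sum_type, Fintype.sum_prod_type, Matrix.of_apply, Sum.elim_inl, Sum.elim_inr,
      Matrix.zero_apply, zero_mul, Finset.sum_const_zero, add_zero, Pi.add_apply,
      Finset.sum_apply, hut]
    ring
  · funext i
    rw [hueff', Matrix.mulVec_add, Matrix.mulVec_add, mulVec_sum']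
    simp only [JstMZ, Matrix.mulVec, dotProduct, he,
      Fintype.sum_sum_type, Fintype.sum_prod_type, Matrix.of_apply, Sum.elim_inl, Sum.elim_inr,
      Matrix.zero_apply, zero_mul, Finset.sum_const_zero, add_zero, Pi.add_apply,
      Finset.sum_apply, hut]
    ring
  · have hE : hammingNorm e = hammingNorm u0 +
        ((∑ t, hammingNorm (u t)) + (hammingNorm u1 + hammingNorm v)) := by
      rw [he, hn_sumElim, hn_sumElim, hn_sumElim, hn_prod]
    calc hammingNorm ueff
        ≤ hammingNorm (u0 + ∑ t, ut t) + hammingNorm u1 := by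
          rw [hueff']; exact hn_add_le _ _
      _ ≤ (hammingNorm u0 + hammingNorm (∑ t, ut t)) + hammingNorm u1 :=
          Nat.add_le_add_right (hn_add_le _ _) _
      _ ≤ (hammingNorm u0 + ∑ t, hammingNorm (ut t)) + hammingNorm u1 :=
          Nat.add_le_add_right (Nat.add_le_add_left (hn_sum_le _ _) _) _
      _ ≤ (hammingNorm u0 + ∑ t, hammingNorm (u t)) + hammingNorm u1 :=
          Nat.add_le_add_right (Nat.add_le_add_left
            (Finset.sum_le_sum fun t _ => hn_inl_le (u t)) _) _
      _ ≤ ((hammingNorm u0 + ∑ t, hammingNorm (u t)) + hammingNorm u1) + hammingNorm v :=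
          Nat.le_add_right _ _
      _ = hammingNorm e := by rw [hE]; ring
end
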